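/- Fix integers r, s ≥ 1, parameters p_0,p_1,p_2,p_3 ∈ [0,1], an integer K ≥ 2, and a function f : Σ → ℝ depending on η only through the coordinates η(x) with |x| ≤ K−2. Then there exist a constant C > 0 and an integer N_0 such that for all N ≥ N_0 and all η ∈ Σ_N, | (Ω^N_{[r,s]'} ψ_N f)(η) − ψ_N( (r/(r+s)) Ω_{A'} f + (s/(r+s)) Ω_B f )(η) | ≤ C/N, where (Ω^N_{[r,s]'} g)(η) := (N/(r+s)) ∑_{ξ∈Σ_N} (P_{A'}^r P_B^s)(η,ξ)[g(ξ) − g(η)]. -/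
import Mathlib


/-- Left endpoint of the player labels: `l_N = -(N-1)/2` if `N` odd, `-N/2` if `N` even. -/
def lN (N : ℕ) : ℤ := -((N : ℤ) / 2)

/-- Right endpoint of the player labels: `r_N = (N-1)/2` if `N` odd, `N/2 - 1` if `N` even. -/
def rN (N : ℕ) : ℤ := ((N : ℤ) - 1) / 2

/-- The representative of `x` modulo `N` lying in `{l_N, …, r_N}` (circular convention). -/
def wrap (N : ℕ) (x : ℤ) : ℤ := lN N + (x - lN N) % (N : ℤ)

/-- Extension of a configuration on `{l_N, …, r_N}` to all of `ℤ`, with value `1` outside. -/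
def extendCfg (N : ℕ) (η : ℤ → Bool) : ℤ → Bool :=
  fun x => if lN N ≤ x ∧ x ≤ rN N then η x else true

/-- `ψ_N` maps `f : Σ → ℝ` to a function on `Σ_N` via the extension by `1`s. -/
def psiN (N : ℕ) (f : (ℤ → Bool) → ℝ) (η : ℤ → Bool) : ℝ := f (extendCfg N η)

/-- Configuration flipped at a single site. -/
def flipAt (η : ℤ → Bool) (x : ℤ) : ℤ → Bool := Function.update η x (!η x)

/-- Configuration with the coordinates at `x` and `x+1` interchanged: `_xη_{x+1}`. -/
def swapAt (η : ℤ → Bool) (x : ℤ) : ℤ → Bool :=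
  Function.update (Function.update η x (η (x + 1))) (x + 1) (η x)

/-- `η^{x,-1}` on `Σ_N`: coordinate `x-1` (circularly) is set to `1` and `x` to `0`. -/
def stepDown (N : ℕ) (η : ℤ → Bool) (x : ℤ) : ℤ → Bool :=
  Function.update (Function.update η (wrap N (x - 1)) true) x false

/-- `η^{x,1}` on `Σ_N`: coordinate `x` is set to `0` and `x+1` (circularly) to `1`. -/
def stepUp (N : ℕ) (η : ℤ → Bool) (x : ℤ) : ℤ → Bool :=
  Function.update (Function.update η (wrap N (x + 1)) true) x false

/-- Game A' flip rate. -/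
noncomputable def cA (x : ℤ) (η : ℤ → Bool) : ℝ :=
  (1 / 2) * ((if η x = η (x + 1) then (1 : ℝ) else 0) +
    (if η x = η (x - 1) then (1 : ℝ) else 0))

/-- The continuum game-A' generator
`(Ω_{A'} f)(η) = ∑_x c'(x,η)[f(η_x) - f(η)] + (1/2)∑_x[f(_xη_{x+1}) - f(η)]`. -/
noncomputable def OmegaA (f : (ℤ → Bool) → ℝ) (η : ℤ → Bool) : ℝ :=
  (∑' x : ℤ, cA x η * (f (flipAt η x) - f η)) +
    (1 / 2) * ∑' x : ℤ, (f (swapAt η x) - f η)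

/-- The discrete game-A' generator
`(Ω^N_{A'} g)(η) = ∑_{x=l_N}^{r_N} [(1/2)g(η^{x,-1}) + (1/2)g(η^{x,1}) - g(η)]`. -/
noncomputable def OmegaNA (N : ℕ) (g : (ℤ → Bool) → ℝ) (η : ℤ → Bool) : ℝ :=
  ∑ x ∈ Finset.Icc (lN N) (rN N),
    ((1 / 2) * g (stepDown N η x) + (1 / 2) * g (stepUp N η x) - g η)

/-- `pSel p₀ p₁ p₂ p₃ a b = p_{2a+b}`. -/
def pSel (p₀ p₁ p₂ p₃ : ℝ) (a b : Bool) : ℝ :=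
  match a, b with
  | false, false => p₀
  | false, true  => p₁
  | true,  false => p₂
  | true,  true  => p₃

/-- Game B flip rate on `Σ = {0,1}^ℤ`. -/
def cB (p₀ p₁ p₂ p₃ : ℝ) (x : ℤ) (η : ℤ → Bool) : ℝ :=
  if η x then 1 - pSel p₀ p₁ p₂ p₃ (η (x - 1)) (η (x + 1))
  else pSel p₀ p₁ p₂ p₃ (η (x - 1)) (η (x + 1))

/-- Game B flip rate on `Σ_N` (neighbors computed circularly). -/
def cBN (p₀ p₁ p₂ p₃ : ℝ) (N : ℕ) (x : ℤ) (η : ℤ → Bool) : ℝ :=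
  if η x then 1 - pSel p₀ p₁ p₂ p₃ (η (wrap N (x - 1))) (η (wrap N (x + 1)))
  else pSel p₀ p₁ p₂ p₃ (η (wrap N (x - 1))) (η (wrap N (x + 1)))

/-- The continuum game-B generator `(Ω_B f)(η) = ∑_x c(x,η)[f(η_x) - f(η)]`. -/
noncomputable def OmegaB (p₀ p₁ p₂ p₃ : ℝ) (f : (ℤ → Bool) → ℝ) (η : ℤ → Bool) : ℝ :=
  ∑' x : ℤ, cB p₀ p₁ p₂ p₃ x η * (f (flipAt η x) - f η)

/-- The discrete game-B generator `(Ω^N_B g)(η) = ∑_{x=l_N}^{r_N} c(x,η)[g(η_x) - g(η)]`. -/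
noncomputable def OmegaNB (p₀ p₁ p₂ p₃ : ℝ) (N : ℕ) (g : (ℤ → Bool) → ℝ)
    (η : ℤ → Bool) : ℝ :=
  ∑ x ∈ Finset.Icc (lN N) (rN N), cBN p₀ p₁ p₂ p₃ N x η * (g (flipAt η x) - g η)

/-- The one-step transition operator of game A' on `Σ_N`:
`(P_{A'} g)(η) = ∑_ξ P_{A'}(η,ξ) g(ξ) = (1/(2N)) ∑_{x=l_N}^{r_N} [g(η^{x,-1}) + g(η^{x,1})]`. -/
noncomputable def PAop (N : ℕ) (g : (ℤ → Bool) → ℝ) (η : ℤ → Bool) : ℝ :=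
  (1 / (2 * (N : ℝ))) * ∑ x ∈ Finset.Icc (lN N) (rN N),
    (g (stepDown N η x) + g (stepUp N η x))

/-- The one-step transition operator of game B on `Σ_N`:
`(P_B g)(η) = ∑_ξ P_B(η,ξ) g(ξ)
            = (1/N) ∑_{y=l_N}^{r_N} [(1 - c(y,η)) g(η) + c(y,η) g(η_y)]`. -/
noncomputable def PBop (p₀ p₁ p₂ p₃ : ℝ) (N : ℕ) (g : (ℤ → Bool) → ℝ)
    (η : ℤ → Bool) : ℝ :=
  (1 / (N : ℝ)) * ∑ y ∈ Finset.Icc (lN N) (rN N),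
    ((1 - cBN p₀ p₁ p₂ p₃ N y η) * g η + cBN p₀ p₁ p₂ p₃ N y η * g (flipAt η y))

section AuxPPGL

/-- N-free version of `stepDown` (valid in the bulk). -/
def sdP (η : ℤ → Bool) (x : ℤ) : ℤ → Bool :=
  Function.update (Function.update η (x - 1) true) x false

/-- N-free version of `stepUp` (valid in the bulk). -/
def suP (η : ℤ → Bool) (x : ℤ) : ℤ → Bool :=
  Function.update (Function.update η (x + 1) true) x false

/-- Truncated game-A' generator. -/
noncomputable def GA' (m : ℤ) (h : (ℤ → Bool) → ℝ) (η : ℤ → Bool) : ℝ :=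
  (1 / 2) * ∑ x ∈ Finset.Icc (-m) m, (h (sdP η x) + h (suP η x) - 2 * h η)

/-- Truncated game-B generator. -/
noncomputable def GB' (p₀ p₁ p₂ p₃ : ℝ) (m : ℤ) (h : (ℤ → Bool) → ℝ) (η : ℤ → Bool) : ℝ :=
  ∑ x ∈ Finset.Icc (-m) m, cB p₀ p₁ p₂ p₃ x η * (h (flipAt η x) - h η)

/-- `h` depends on coordinates in `[-m, m]` only. -/
def Loc (m : ℤ) (h : (ℤ → Bool) → ℝ) : Prop :=
  ∀ η ζ : ℤ → Bool, (∀ x : ℤ, |x| ≤ m → η x = ζ x) → h η = h ζ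

lemma Loc.mono {m m' : ℤ} {h : (ℤ → Bool) → ℝ} (hm : m ≤ m') (hl : Loc m h) : Loc m' h := by
  intro η ζ hagree
  exact hl η ζ fun x hx => hagree x (le_trans hx hm)

lemma rN_eq_lN (N : ℕ) (hN : 1 ≤ N) : rN N = lN N + N - 1 := by
  unfold rN lN; omega

lemma card_Icc_lN_rN (N : ℕ) (hN : 1 ≤ N) : (Finset.Icc (lN N) (rN N)).card = N := by
  rw [Int.card_Icc]; have := rN_eq_lN N hN; omega

lemma wrap_eq_self (N : ℕ) (x : ℤ) (h1 : lN N ≤ x) (h2 : x ≤ rN N) : wrap N x = x := by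
  have hN : 1 ≤ N := by by_contra h; interval_cases N <;> simp [lN, rN] at h1 h2 <;> omega
  have hrl := rN_eq_lN N hN
  have hmod : (x - lN N) % (N : ℤ) = x - lN N :=
    Int.emod_eq_of_lt (by omega) (by omega)
  unfold wrap; omega

lemma wrap_sub_one (N : ℕ) (hN : 1 ≤ N) (x : ℤ) (h1 : lN N ≤ x) (h2 : x ≤ rN N) :
    wrap N (x - 1) = if x = lN N then rN N else x - 1 := by
  have hrl := rN_eq_lN N hN
  by_cases hx : x = lN N
  · subst hx
    rw [if_pos rfl]
    have h3 : (lN N - 1 - lN N) % (N : ℤ) = (N : ℤ) - 1 := by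
      have he : (lN N - 1 - lN N) = ((N : ℤ) - 1) + (N : ℤ) * (-1) := by ring
      rw [he, Int.add_mul_emod_self_left, Int.emod_eq_of_lt (by omega) (by omega)]
    unfold wrap; omega
  · rw [if_neg hx]; exact wrap_eq_self N (x - 1) (by omega) (by omega)

lemma wrap_add_one (N : ℕ) (hN : 1 ≤ N) (x : ℤ) (h1 : lN N ≤ x) (h2 : x ≤ rN N) :
    wrap N (x + 1) = if x = rN N then lN N else x + 1 := by
  have hrl := rN_eq_lN N hN
  by_cases hx : x = rN N
  · subst hx
    have h3 : (rN N + 1 - lN N) % (N : ℤ) = 0 := by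
      have : rN N + 1 - lN N = (N : ℤ) := by omega
      rw [this, Int.emod_self]
    rw [if_pos rfl]
    unfold wrap; omega
  · rw [if_neg hx]; exact wrap_eq_self N (x + 1) (by omega) (by omega)

lemma extendCfg_apply_of_mem (N : ℕ) (η : ℤ → Bool) (x : ℤ) (h1 : lN N ≤ x) (h2 : x ≤ rN N) :
    extendCfg N η x = η x := by
  unfold extendCfg; rw [if_pos ⟨h1, h2⟩]

lemma extendCfg_update (N : ℕ) (η : ℤ → Bool) (a : ℤ) (v : Bool)
    (h1 : lN N ≤ a) (h2 : a ≤ rN N) :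
    extendCfg N (Function.update η a v) = Function.update (extendCfg N η) a v := by
  funext x
  by_cases hx : x = a
  · subst hx
    simp [extendCfg, Function.update_self, h1, h2]
  · simp [extendCfg, Function.update_of_ne hx]

end AuxPPGL
section AuxPPGL2

lemma update2_agree {η ζ : ℤ → Bool} {a b : ℤ} {u v : Bool} (y : ℤ) (h : η y = ζ y) :
    Function.update (Function.update η a u) b v y
      = Function.update (Function.update ζ a u) b v y := by
  rcases eq_or_ne y b with rfl | hb
  · simp
  · rcases eq_or_ne y a with rfl | ha
    · simp [Function.update_of_ne hb]
    · simp [Function.update_of_ne hb, Function.update_of_ne ha, h]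

lemma flipAt_agree {η ζ : ℤ → Bool} {x : ℤ} (y : ℤ) (h : η y = ζ y) (hx : η x = ζ x) :
    flipAt η x y = flipAt ζ x y := by
  rcases eq_or_ne y x with rfl | hn
  · simp [flipAt, hx]
  · simp [flipAt, Function.update_of_ne hn, h]

lemma exists_bound (m : ℤ) (h : (ℤ → Bool) → ℝ) (hh : Loc m h) :
    ∃ M : ℝ, 0 ≤ M ∧ ∀ η, |h η| ≤ M := by
  classical
  obtain ⟨M, hM⟩ := Finite.exists_le
    (fun v : ({x : ℤ // x ∈ Finset.Icc (-m) m} → Bool) =>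
      |h (fun x => if hx : x ∈ Finset.Icc (-m) m then v ⟨x, hx⟩ else true)|)
  refine ⟨M, le_trans (abs_nonneg _) (hM (fun _ => true)), ?_⟩
  intro η
  have heq : h η = h (fun x => if hx : x ∈ Finset.Icc (-m) m then η x else true) := by
    apply hh
    intro x hx
    have hxT : x ∈ Finset.Icc (-m) m := by
      rw [Finset.mem_Icc]; rw [abs_le] at hx; omega
    simp only [dif_pos hxT]
  rw [heq]
  exact hM (fun i => η i.1)

lemma pSel_mem {p₀ p₁ p₂ p₃ : ℝ}
    (h₀ : p₀ ∈ Set.Icc (0 : ℝ) 1) (h₁ : p₁ ∈ Set.Icc (0 : ℝ) 1)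
    (h₂ : p₂ ∈ Set.Icc (0 : ℝ) 1) (h₃ : p₃ ∈ Set.Icc (0 : ℝ) 1)
    (a b : Bool) : 0 ≤ pSel p₀ p₁ p₂ p₃ a b ∧ pSel p₀ p₁ p₂ p₃ a b ≤ 1 := by
  cases a <;> cases b
  · exact ⟨h₀.1, h₀.2⟩
  · exact ⟨h₁.1, h₁.2⟩
  · exact ⟨h₂.1, h₂.2⟩
  · exact ⟨h₃.1, h₃.2⟩

lemma cB_mem {p₀ p₁ p₂ p₃ : ℝ}
    (h₀ : p₀ ∈ Set.Icc (0 : ℝ) 1) (h₁ : p₁ ∈ Set.Icc (0 : ℝ) 1)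
    (h₂ : p₂ ∈ Set.Icc (0 : ℝ) 1) (h₃ : p₃ ∈ Set.Icc (0 : ℝ) 1)
    (x : ℤ) (η : ℤ → Bool) : 0 ≤ cB p₀ p₁ p₂ p₃ x η ∧ cB p₀ p₁ p₂ p₃ x η ≤ 1 := by
  have := pSel_mem h₀ h₁ h₂ h₃ (η (x - 1)) (η (x + 1))
  unfold cB
  split <;> constructor <;> linarith [this.1, this.2]

lemma cBN_mem {p₀ p₁ p₂ p₃ : ℝ}
    (h₀ : p₀ ∈ Set.Icc (0 : ℝ) 1) (h₁ : p₁ ∈ Set.Icc (0 : ℝ) 1)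
    (h₂ : p₂ ∈ Set.Icc (0 : ℝ) 1) (h₃ : p₃ ∈ Set.Icc (0 : ℝ) 1)
    (N : ℕ) (x : ℤ) (η : ℤ → Bool) :
    0 ≤ cBN p₀ p₁ p₂ p₃ N x η ∧ cBN p₀ p₁ p₂ p₃ N x η ≤ 1 := by
  have := pSel_mem h₀ h₁ h₂ h₃ (η (wrap N (x - 1))) (η (wrap N (x + 1)))
  unfold cBN
  split <;> constructor <;> linarith [this.1, this.2]

lemma GA'_loc (m m' : ℤ) (h : (ℤ → Bool) → ℝ) (hh : Loc m h) : Loc m (GA' m' h) := by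
  intro η ζ hagree
  unfold GA'
  congr 1
  apply Finset.sum_congr rfl
  intro x _
  have h1 : h (sdP η x) = h (sdP ζ x) :=
    hh _ _ fun y hy => update2_agree y (hagree y hy)
  have h2 : h (suP η x) = h (suP ζ x) :=
    hh _ _ fun y hy => update2_agree y (hagree y hy)
  rw [h1, h2, hh η ζ hagree]

lemma GB'_loc (p₀ p₁ p₂ p₃ : ℝ) (m m' M : ℤ) (h : (ℤ → Bool) → ℝ)
    (h1 : m ≤ M) (h2 : m' + 1 ≤ M) (hm' : 0 ≤ m') (hh : Loc m h) :
    Loc M (GB' p₀ p₁ p₂ p₃ m' h) := by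
  intro η ζ hagree
  unfold GB'
  apply Finset.sum_congr rfl
  intro x hx
  rw [Finset.mem_Icc] at hx
  have hx1 : η (x - 1) = ζ (x - 1) := hagree _ (by rw [abs_le]; omega)
  have hx2 : η (x + 1) = ζ (x + 1) := hagree _ (by rw [abs_le]; omega)
  have hx0 : η x = ζ x := hagree _ (by rw [abs_le]; omega)
  have hcB : cB p₀ p₁ p₂ p₃ x η = cB p₀ p₁ p₂ p₃ x ζ := by
    unfold cB; rw [hx1, hx2, hx0]
  have hflip : h (flipAt η x) = h (flipAt ζ x) := by
    apply hh
    intro y hy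
    exact flipAt_agree y (hagree y (by rw [abs_le] at hy ⊢; omega)) hx0
  rw [hcB, hflip, hh η ζ fun y hy => hagree y (by rw [abs_le] at hy ⊢; omega)]

lemma card_Icc_real (m : ℤ) (hm : 0 ≤ m) :
    ((Finset.Icc (-m) m).card : ℝ) = 2 * (m : ℝ) + 1 := by
  rw [Int.card_Icc]
  have : (m + 1 - -m).toNat = (2 * m + 1).toNat := by omega
  rw [this]
  have h2 : ((2 * m + 1).toNat : ℤ) = 2 * m + 1 := Int.toNat_of_nonneg (by omega)
  push_cast
  exact_mod_cast congrArg (fun z : ℤ => (z : ℝ)) h2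

lemma GA'_bound (m' : ℤ) (hm' : 0 ≤ m') (M : ℝ) (h : (ℤ → Bool) → ℝ)
    (hb : ∀ η, |h η| ≤ M) (η : ℤ → Bool) :
    |GA' m' h η| ≤ (2 * (m' : ℝ) + 1) * (2 * M) := by
  unfold GA'
  rw [abs_mul]
  have h1 : |∑ x ∈ Finset.Icc (-m') m', (h (sdP η x) + h (suP η x) - 2 * h η)|
      ≤ (2 * (m' : ℝ) + 1) * (4 * M) := by
    calc |∑ x ∈ Finset.Icc (-m') m', (h (sdP η x) + h (suP η x) - 2 * h η)|
        ≤ ∑ x ∈ Finset.Icc (-m') m', |h (sdP η x) + h (suP η x) - 2 * h η| :=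
          Finset.abs_sum_le_sum_abs _ _
      _ ≤ ∑ x ∈ Finset.Icc (-m') m', (4 * M) := by
          apply Finset.sum_le_sum
          intro x _
          have := hb (sdP η x)
          have := hb (suP η x)
          have := hb η
          calc |h (sdP η x) + h (suP η x) - 2 * h η|
              ≤ |h (sdP η x) + h (suP η x)| + |2 * h η| := abs_sub _ _
            _ ≤ |h (sdP η x)| + |h (suP η x)| + 2 * |h η| := by
                rw [abs_mul]; simp only [abs_two]
                linarith [abs_add_le (h (sdP η x)) (h (suP η x))]
            _ ≤ 4 * M := by linarith
      _ = (2 * (m' : ℝ) + 1) * (4 * M) := by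
          rw [Finset.sum_const, nsmul_eq_mul, card_Icc_real m' hm']
  have hM0 : 0 ≤ M := le_trans (abs_nonneg _) (hb η)
  calc |(1 : ℝ) / 2| * |∑ x ∈ Finset.Icc (-m') m', (h (sdP η x) + h (suP η x) - 2 * h η)|
      ≤ (1 / 2) * ((2 * (m' : ℝ) + 1) * (4 * M)) := by
        rw [abs_of_pos (by norm_num : (0:ℝ) < 1/2)]
        apply mul_le_mul_of_nonneg_left h1 (by norm_num)
    _ = (2 * (m' : ℝ) + 1) * (2 * M) := by ring

lemma GB'_bound {p₀ p₁ p₂ p₃ : ℝ}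
    (h₀ : p₀ ∈ Set.Icc (0 : ℝ) 1) (h₁ : p₁ ∈ Set.Icc (0 : ℝ) 1)
    (h₂ : p₂ ∈ Set.Icc (0 : ℝ) 1) (h₃ : p₃ ∈ Set.Icc (0 : ℝ) 1)
    (m' : ℤ) (hm' : 0 ≤ m') (M : ℝ) (h : (ℤ → Bool) → ℝ)
    (hb : ∀ η, |h η| ≤ M) (η : ℤ → Bool) :
    |GB' p₀ p₁ p₂ p₃ m' h η| ≤ (2 * (m' : ℝ) + 1) * (2 * M) := by
  unfold GB'
  calc |∑ x ∈ Finset.Icc (-m') m', cB p₀ p₁ p₂ p₃ x η * (h (flipAt η x) - h η)|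
      ≤ ∑ x ∈ Finset.Icc (-m') m', |cB p₀ p₁ p₂ p₃ x η * (h (flipAt η x) - h η)| :=
        Finset.abs_sum_le_sum_abs _ _
    _ ≤ ∑ x ∈ Finset.Icc (-m') m', (2 * M) := by
        apply Finset.sum_le_sum
        intro x _
        rw [abs_mul]
        have hc := cB_mem h₀ h₁ h₂ h₃ x η
        have hd : |h (flipAt η x) - h η| ≤ 2 * M := by
          have := hb (flipAt η x); have := hb η
          calc |h (flipAt η x) - h η| ≤ |h (flipAt η x)| + |h η| := abs_sub _ _
            _ ≤ 2 * M := by linarith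
        calc |cB p₀ p₁ p₂ p₃ x η| * |h (flipAt η x) - h η|
            ≤ 1 * (2 * M) := by
              apply mul_le_mul (by rw [abs_of_nonneg hc.1]; exact hc.2) hd (abs_nonneg _)
                (by norm_num)
          _ = 2 * M := by ring
    _ = (2 * (m' : ℝ) + 1) * (2 * M) := by
        rw [Finset.sum_const, nsmul_eq_mul, card_Icc_real m' hm']

end AuxPPGL2
section AuxPPGL3

lemma PA_lin (N : ℕ) (a b : ℝ) (u v w : (ℤ → Bool) → ℝ) (η : ℤ → Bool) :
    PAop N (fun ζ => u ζ + a * v ζ + b * w ζ) η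
      = PAop N u η + a * PAop N v η + b * PAop N w η := by
  unfold PAop
  rw [show ∀ S : Finset ℤ, ∑ x ∈ S,
      ((u (stepDown N η x) + a * v (stepDown N η x) + b * w (stepDown N η x)) +
       (u (stepUp N η x) + a * v (stepUp N η x) + b * w (stepUp N η x)))
    = ∑ x ∈ S, (u (stepDown N η x) + u (stepUp N η x))
      + a * ∑ x ∈ S, (v (stepDown N η x) + v (stepUp N η x))
      + b * ∑ x ∈ S, (w (stepDown N η x) + w (stepUp N η x)) from fun S => by
      rw [Finset.mul_sum, Finset.mul_sum, ← Finset.sum_add_distrib, ← Finset.sum_add_distrib]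
      exact Finset.sum_congr rfl fun x _ => by ring]
  ring

lemma PB_lin (p₀ p₁ p₂ p₃ : ℝ) (N : ℕ) (a b : ℝ) (u v w : (ℤ → Bool) → ℝ) (η : ℤ → Bool) :
    PBop p₀ p₁ p₂ p₃ N (fun ζ => u ζ + a * v ζ + b * w ζ) η
      = PBop p₀ p₁ p₂ p₃ N u η + a * PBop p₀ p₁ p₂ p₃ N v η + b * PBop p₀ p₁ p₂ p₃ N w η := by
  unfold PBop
  rw [show ∀ S : Finset ℤ, ∑ y ∈ S,
      ((1 - cBN p₀ p₁ p₂ p₃ N y η) * (u η + a * v η + b * w η) +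
        cBN p₀ p₁ p₂ p₃ N y η * (u (flipAt η y) + a * v (flipAt η y) + b * w (flipAt η y)))
    = ∑ y ∈ S, ((1 - cBN p₀ p₁ p₂ p₃ N y η) * u η + cBN p₀ p₁ p₂ p₃ N y η * u (flipAt η y))
      + a * ∑ y ∈ S, ((1 - cBN p₀ p₁ p₂ p₃ N y η) * v η
          + cBN p₀ p₁ p₂ p₃ N y η * v (flipAt η y))
      + b * ∑ y ∈ S, ((1 - cBN p₀ p₁ p₂ p₃ N y η) * w η
          + cBN p₀ p₁ p₂ p₃ N y η * w (flipAt η y)) from fun S => by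
      rw [Finset.mul_sum, Finset.mul_sum, ← Finset.sum_add_distrib, ← Finset.sum_add_distrib]
      exact Finset.sum_congr rfl fun y _ => by ring]
  ring

lemma PA_contr (N : ℕ) (hN : 1 ≤ N) (h h' : (ℤ → Bool) → ℝ) (ε : ℝ)
    (hε : ∀ η, |h η - h' η| ≤ ε) (η : ℤ → Bool) :
    |PAop N h η - PAop N h' η| ≤ ε := by
  have hNR : (0 : ℝ) < (N : ℝ) := by exact_mod_cast hN
  have hdiff : PAop N h η - PAop N h' η
      = (1 / (2 * (N : ℝ))) * ∑ x ∈ Finset.Icc (lN N) (rN N),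
        ((h (stepDown N η x) - h' (stepDown N η x)) + (h (stepUp N η x) - h' (stepUp N η x))) := by
    unfold PAop
    rw [← mul_sub, ← Finset.sum_sub_distrib]
    congr 1
    exact Finset.sum_congr rfl fun x _ => by ring
  rw [hdiff, abs_mul]
  have hsum : |∑ x ∈ Finset.Icc (lN N) (rN N),
      ((h (stepDown N η x) - h' (stepDown N η x)) + (h (stepUp N η x) - h' (stepUp N η x)))|
      ≤ (N : ℝ) * (2 * ε) := by
    calc |∑ x ∈ Finset.Icc (lN N) (rN N),
        ((h (stepDown N η x) - h' (stepDown N η x)) + (h (stepUp N η x) - h' (stepUp N η x)))|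
        ≤ ∑ x ∈ Finset.Icc (lN N) (rN N),
          |(h (stepDown N η x) - h' (stepDown N η x)) + (h (stepUp N η x) - h' (stepUp N η x))| :=
          Finset.abs_sum_le_sum_abs _ _
      _ ≤ ∑ _x ∈ Finset.Icc (lN N) (rN N), (2 * ε) := by
          apply Finset.sum_le_sum
          intro x _
          calc |(h (stepDown N η x) - h' (stepDown N η x))
                + (h (stepUp N η x) - h' (stepUp N η x))|
              ≤ |h (stepDown N η x) - h' (stepDown N η x)|
                + |h (stepUp N η x) - h' (stepUp N η x)| := abs_add_le _ _
            _ ≤ 2 * ε := by linarith [hε (stepDown N η x), hε (stepUp N η x)]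
      _ = (N : ℝ) * (2 * ε) := by
          rw [Finset.sum_const, nsmul_eq_mul, card_Icc_lN_rN N hN]
  calc |1 / (2 * (N : ℝ))| * |∑ x ∈ Finset.Icc (lN N) (rN N),
      ((h (stepDown N η x) - h' (stepDown N η x)) + (h (stepUp N η x) - h' (stepUp N η x)))|
      ≤ (1 / (2 * (N : ℝ))) * ((N : ℝ) * (2 * ε)) := by
        rw [abs_of_pos (by positivity)]
        exact mul_le_mul_of_nonneg_left hsum (by positivity)
    _ = ε := by field_simp

lemma PB_contr {p₀ p₁ p₂ p₃ : ℝ}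
    (h₀ : p₀ ∈ Set.Icc (0 : ℝ) 1) (h₁ : p₁ ∈ Set.Icc (0 : ℝ) 1)
    (h₂ : p₂ ∈ Set.Icc (0 : ℝ) 1) (h₃ : p₃ ∈ Set.Icc (0 : ℝ) 1)
    (N : ℕ) (hN : 1 ≤ N) (h h' : (ℤ → Bool) → ℝ) (ε : ℝ)
    (hε : ∀ η, |h η - h' η| ≤ ε) (η : ℤ → Bool) :
    |PBop p₀ p₁ p₂ p₃ N h η - PBop p₀ p₁ p₂ p₃ N h' η| ≤ ε := by
  have hNR : (0 : ℝ) < (N : ℝ) := by exact_mod_cast hN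
  have hdiff : PBop p₀ p₁ p₂ p₃ N h η - PBop p₀ p₁ p₂ p₃ N h' η
      = (1 / (N : ℝ)) * ∑ y ∈ Finset.Icc (lN N) (rN N),
        ((1 - cBN p₀ p₁ p₂ p₃ N y η) * (h η - h' η)
          + cBN p₀ p₁ p₂ p₃ N y η * (h (flipAt η y) - h' (flipAt η y))) := by
    unfold PBop
    rw [← mul_sub, ← Finset.sum_sub_distrib]
    congr 1
    exact Finset.sum_congr rfl fun y _ => by ring
  rw [hdiff, abs_mul]
  have hε0 : 0 ≤ ε := le_trans (abs_nonneg _) (hε η)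
  have hsum : |∑ y ∈ Finset.Icc (lN N) (rN N),
      ((1 - cBN p₀ p₁ p₂ p₃ N y η) * (h η - h' η)
        + cBN p₀ p₁ p₂ p₃ N y η * (h (flipAt η y) - h' (flipAt η y)))|
      ≤ (N : ℝ) * ε := by
    calc |∑ y ∈ Finset.Icc (lN N) (rN N),
        ((1 - cBN p₀ p₁ p₂ p₃ N y η) * (h η - h' η)
          + cBN p₀ p₁ p₂ p₃ N y η * (h (flipAt η y) - h' (flipAt η y)))|
        ≤ ∑ y ∈ Finset.Icc (lN N) (rN N),
          |(1 - cBN p₀ p₁ p₂ p₃ N y η) * (h η - h' η)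
            + cBN p₀ p₁ p₂ p₃ N y η * (h (flipAt η y) - h' (flipAt η y))| :=
          Finset.abs_sum_le_sum_abs _ _
      _ ≤ ∑ _y ∈ Finset.Icc (lN N) (rN N), ε := by
          apply Finset.sum_le_sum
          intro y _
          have hc := cBN_mem h₀ h₁ h₂ h₃ N y η
          calc |(1 - cBN p₀ p₁ p₂ p₃ N y η) * (h η - h' η)
                + cBN p₀ p₁ p₂ p₃ N y η * (h (flipAt η y) - h' (flipAt η y))|
              ≤ |(1 - cBN p₀ p₁ p₂ p₃ N y η) * (h η - h' η)|
                + |cBN p₀ p₁ p₂ p₃ N y η * (h (flipAt η y) - h' (flipAt η y))| := abs_add_le _ _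
            _ = (1 - cBN p₀ p₁ p₂ p₃ N y η) * |h η - h' η|
                + cBN p₀ p₁ p₂ p₃ N y η * |h (flipAt η y) - h' (flipAt η y)| := by
                rw [abs_mul, abs_mul, abs_of_nonneg (by linarith [hc.2]),
                  abs_of_nonneg hc.1]
            _ ≤ (1 - cBN p₀ p₁ p₂ p₃ N y η) * ε + cBN p₀ p₁ p₂ p₃ N y η * ε := by
                apply add_le_add
                · exact mul_le_mul_of_nonneg_left (hε η) (by linarith [hc.2])
                · exact mul_le_mul_of_nonneg_left (hε (flipAt η y)) hc.1
            _ = ε := by ring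
      _ = (N : ℝ) * ε := by
          rw [Finset.sum_const, nsmul_eq_mul, card_Icc_lN_rN N hN]
  calc |1 / (N : ℝ)| * |∑ y ∈ Finset.Icc (lN N) (rN N),
      ((1 - cBN p₀ p₁ p₂ p₃ N y η) * (h η - h' η)
        + cBN p₀ p₁ p₂ p₃ N y η * (h (flipAt η y) - h' (flipAt η y)))|
      ≤ (1 / (N : ℝ)) * ((N : ℝ) * ε) := by
        rw [abs_of_pos (by positivity)]
        exact mul_le_mul_of_nonneg_left hsum (by positivity)
    _ = ε := by field_simp

end AuxPPGL3
section AuxPPGL4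

lemma N_pos_of_fit (N : ℕ) (m : ℤ) (hm : 0 ≤ m) (hfitR : m + 2 ≤ rN N) : 1 ≤ N := by
  by_contra h0
  have hN0 : N = 0 := by omega
  subst hN0
  unfold rN at hfitR
  norm_num at hfitR
  omega

lemma PA_expand (N : ℕ) (m : ℤ) (hm : 0 ≤ m) (h : (ℤ → Bool) → ℝ) (hLoc : Loc m h)
    (hfitR : m + 2 ≤ rN N) (hfitL : lN N ≤ -(m + 2)) (η : ℤ → Bool) :
    PAop N h η = h η + (1 / (N : ℝ)) * GA' (m + 1) h η := by
  have hN : 1 ≤ N := N_pos_of_fit N m hm hfitR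
  have hNR : (0 : ℝ) < (N : ℝ) := by exact_mod_cast hN
  have hrl := rN_eq_lN N hN
  set W := Finset.Icc (-(m + 1)) (m + 1) with hWdef
  have hWL : W ⊆ Finset.Icc (lN N) (rN N) := by
    intro x hx
    rw [hWdef, Finset.mem_Icc] at hx
    rw [Finset.mem_Icc]
    omega
  unfold PAop GA'
  rw [← Finset.sum_sdiff hWL]
  have hdiffsum : ∑ x ∈ Finset.Icc (lN N) (rN N) \ W,
      (h (stepDown N η x) + h (stepUp N η x))
      = ((Finset.Icc (lN N) (rN N) \ W).card : ℝ) * (2 * h η) := by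
    rw [Finset.sum_congr rfl (fun x hx => ?_), Finset.sum_const, nsmul_eq_mul]
    rw [Finset.mem_sdiff, Finset.mem_Icc, hWdef, Finset.mem_Icc] at hx
    obtain ⟨⟨hx1, hx2⟩, hx3⟩ := hx
    have hsd : h (stepDown N η x) = h η := by
      apply hLoc
      intro y hy
      rw [abs_le] at hy
      unfold stepDown
      have hw := wrap_sub_one N hN x hx1 hx2
      have hyne : y ≠ x := by omega
      have hyne2 : y ≠ wrap N (x - 1) := by
        by_cases hxl : x = lN N
        · rw [hw, if_pos hxl]; omega
        · rw [hw, if_neg hxl]; omega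
      rw [Function.update_of_ne hyne, Function.update_of_ne hyne2]
    have hsu : h (stepUp N η x) = h η := by
      apply hLoc
      intro y hy
      rw [abs_le] at hy
      unfold stepUp
      have hw := wrap_add_one N hN x hx1 hx2
      have hyne : y ≠ x := by omega
      have hyne2 : y ≠ wrap N (x + 1) := by
        by_cases hxl : x = rN N
        · rw [hw, if_pos hxl]; omega
        · rw [hw, if_neg hxl]; omega
      rw [Function.update_of_ne hyne, Function.update_of_ne hyne2]
    rw [hsd, hsu]
    ring
  have hWsum : ∑ x ∈ W, (h (stepDown N η x) + h (stepUp N η x))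
      = ∑ x ∈ W, (h (sdP η x) + h (suP η x)) := by
    apply Finset.sum_congr rfl
    intro x hx
    rw [hWdef, Finset.mem_Icc] at hx
    have hsd : stepDown N η x = sdP η x := by
      unfold stepDown sdP
      rw [wrap_eq_self N (x - 1) (by omega) (by omega)]
    have hsu : stepUp N η x = suP η x := by
      unfold stepUp suP
      rw [wrap_eq_self N (x + 1) (by omega) (by omega)]
    rw [hsd, hsu]
  rw [hdiffsum, hWsum]
  have hsplit : ∑ x ∈ W, (h (sdP η x) + h (suP η x) - 2 * h η)
      = ∑ x ∈ W, (h (sdP η x) + h (suP η x)) - (W.card : ℝ) * (2 * h η) := by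
    rw [Finset.sum_sub_distrib, Finset.sum_const, nsmul_eq_mul]
  rw [hsplit]
  have hcards : ((Finset.Icc (lN N) (rN N) \ W).card : ℝ) = (N : ℝ) - (W.card : ℝ) := by
    have h1 : (Finset.Icc (lN N) (rN N) \ W).card + W.card
        = (Finset.Icc (lN N) (rN N)).card := Finset.card_sdiff_add_card_eq_card hWL
    rw [card_Icc_lN_rN N hN] at h1
    have h2 : ((Finset.Icc (lN N) (rN N) \ W).card : ℝ) + (W.card : ℝ) = (N : ℝ) := by
      exact_mod_cast congrArg (fun n : ℕ => (n : ℝ)) h1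
    linarith
  rw [hcards]
  field_simp
  ring

lemma PB_expand {p₀ p₁ p₂ p₃ : ℝ} (N : ℕ) (m : ℤ) (hm : 0 ≤ m) (h : (ℤ → Bool) → ℝ)
    (hLoc : Loc m h) (hfitR : m + 2 ≤ rN N) (hfitL : lN N ≤ -(m + 2)) (η : ℤ → Bool) :
    PBop p₀ p₁ p₂ p₃ N h η = h η + (1 / (N : ℝ)) * GB' p₀ p₁ p₂ p₃ (m + 1) h η := by
  have hN : 1 ≤ N := N_pos_of_fit N m hm hfitR
  have hNR : (0 : ℝ) < (N : ℝ) := by exact_mod_cast hN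
  have hrl := rN_eq_lN N hN
  set W := Finset.Icc (-(m + 1)) (m + 1) with hWdef
  have hWL : W ⊆ Finset.Icc (lN N) (rN N) := by
    intro x hx
    rw [hWdef, Finset.mem_Icc] at hx
    rw [Finset.mem_Icc]
    omega
  unfold PBop GB'
  rw [← Finset.sum_sdiff hWL]
  have hdiffsum : ∑ y ∈ Finset.Icc (lN N) (rN N) \ W,
      ((1 - cBN p₀ p₁ p₂ p₃ N y η) * h η + cBN p₀ p₁ p₂ p₃ N y η * h (flipAt η y))
      = ((Finset.Icc (lN N) (rN N) \ W).card : ℝ) * h η := by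
    rw [Finset.sum_congr rfl (fun y hy => ?_), Finset.sum_const, nsmul_eq_mul]
    rw [Finset.mem_sdiff, Finset.mem_Icc, hWdef, Finset.mem_Icc] at hy
    obtain ⟨⟨hy1, hy2⟩, hy3⟩ := hy
    have hflip : h (flipAt η y) = h η := by
      apply hLoc
      intro z hz
      rw [abs_le] at hz
      unfold flipAt
      rw [Function.update_of_ne (by omega)]
    rw [hflip]
    ring
  have hWsum : ∑ y ∈ W, ((1 - cBN p₀ p₁ p₂ p₃ N y η) * h η
        + cBN p₀ p₁ p₂ p₃ N y η * h (flipAt η y))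
      = ∑ y ∈ W, (cB p₀ p₁ p₂ p₃ y η * (h (flipAt η y) - h η)) + (W.card : ℝ) * h η := by
    rw [show (W.card : ℝ) * h η = ∑ _y ∈ W, h η by rw [Finset.sum_const, nsmul_eq_mul]]
    rw [← Finset.sum_add_distrib]
    apply Finset.sum_congr rfl
    intro y hy
    rw [hWdef, Finset.mem_Icc] at hy
    have hc : cBN p₀ p₁ p₂ p₃ N y η = cB p₀ p₁ p₂ p₃ y η := by
      unfold cBN cB
      rw [wrap_eq_self N (y - 1) (by omega) (by omega),
        wrap_eq_self N (y + 1) (by omega) (by omega)]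
    rw [hc]
    ring
  rw [hdiffsum, hWsum]
  have hcards : ((Finset.Icc (lN N) (rN N) \ W).card : ℝ) = (N : ℝ) - (W.card : ℝ) := by
    have h1 : (Finset.Icc (lN N) (rN N) \ W).card + W.card
        = (Finset.Icc (lN N) (rN N)).card := Finset.card_sdiff_add_card_eq_card hWL
    rw [card_Icc_lN_rN N hN] at h1
    have h2 : ((Finset.Icc (lN N) (rN N) \ W).card : ℝ) + (W.card : ℝ) = (N : ℝ) := by
      exact_mod_cast congrArg (fun n : ℕ => (n : ℝ)) h1
    linarith
  rw [hcards, hWdef]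
  generalize (∑ y ∈ Finset.Icc (-(m + 1)) (m + 1), cB p₀ p₁ p₂ p₃ y η * (h (flipAt η y) - h η)) = S
  field_simp
  ring

end AuxPPGL4
section AuxPPGL5

lemma key_swap_flip (f : (ℤ → Bool) → ℝ) (ζ : ℤ → Bool) (x : ℤ) :
    (f (sdP ζ (x + 1)) - f ζ) + (f (suP ζ x) - f ζ)
      = (if ζ x = ζ (x + 1) then
          ((f (flipAt ζ x) - f ζ) + (f (flipAt ζ (x + 1)) - f ζ)) else 0)
        + (f (swapAt ζ x) - f ζ) := by
  have hne : x ≠ x + 1 := by omega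
  cases h0 : ζ x <;> cases h1 : ζ (x + 1)
  · -- false, false
    have e1 : sdP ζ (x + 1) = flipAt ζ x := by
      funext y
      simp only [sdP, flipAt, Function.update_apply, add_sub_cancel_right]
      split_ifs with hA hB hB <;> simp_all <;> omega
    have e2 : suP ζ x = flipAt ζ (x + 1) := by
      funext y
      simp only [suP, flipAt, Function.update_apply]
      split_ifs with hA hB hB <;> simp_all <;> omega
    have e3 : swapAt ζ x = ζ := by
      funext y
      simp only [swapAt, Function.update_apply]
      split_ifs with hA hB <;> simp_all
    rw [e1, e2, e3, if_pos rfl]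
    ring
  · -- false, true
    have e1 : sdP ζ (x + 1) = swapAt ζ x := by
      funext y
      simp only [sdP, swapAt, Function.update_apply, add_sub_cancel_right]
      split_ifs with hA hB hB <;> simp_all <;> omega
    have e2 : suP ζ x = ζ := by
      funext y
      simp only [suP, Function.update_apply]
      split_ifs with hA hB <;> simp_all <;> omega
    rw [e1, e2, if_neg (by simp)]
    ring
  · -- true, false
    have e1 : sdP ζ (x + 1) = ζ := by
      funext y
      simp only [sdP, Function.update_apply, add_sub_cancel_right]
      split_ifs with hA hB <;> simp_all <;> omega
    have e2 : suP ζ x = swapAt ζ x := by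
      funext y
      simp only [suP, swapAt, Function.update_apply]
      split_ifs with hA hB hB <;> simp_all <;> omega
    rw [e1, e2, if_neg (by simp)]
    ring
  · -- true, true
    have e1 : sdP ζ (x + 1) = flipAt ζ (x + 1) := by
      funext y
      simp only [sdP, flipAt, Function.update_apply, add_sub_cancel_right]
      split_ifs with hA hB hB <;> simp_all <;> omega
    have e2 : suP ζ x = flipAt ζ x := by
      funext y
      simp only [suP, flipAt, Function.update_apply]
      split_ifs with hA hB hB <;> simp_all <;> omega
    have e3 : swapAt ζ x = ζ := by
      funext y
      simp only [swapAt, Function.update_apply]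
      split_ifs with hA hB <;> simp_all
    rw [e1, e2, e3, if_pos rfl]
    ring

end AuxPPGL5
section AuxPPGL6

variable {K : ℕ} {f : (ℤ → Bool) → ℝ}

lemma van_sdP (hK : 2 ≤ K)
    (hf : ∀ η ζ : ℤ → Bool, (∀ x : ℤ, |x| ≤ (K : ℤ) - 2 → η x = ζ x) → f η = f ζ)
    (ζ : ℤ → Bool) (x : ℤ) (hx : x ≤ -(K : ℤ) ∨ (K : ℤ) ≤ x) : f (sdP ζ x) = f ζ := by
  apply hf
  intro y hy
  rw [abs_le] at hy
  unfold sdP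
  rw [Function.update_of_ne (by omega), Function.update_of_ne (by omega)]

lemma van_suP (hK : 2 ≤ K)
    (hf : ∀ η ζ : ℤ → Bool, (∀ x : ℤ, |x| ≤ (K : ℤ) - 2 → η x = ζ x) → f η = f ζ)
    (ζ : ℤ → Bool) (x : ℤ) (hx : x ≤ -(K : ℤ) ∨ (K : ℤ) ≤ x) : f (suP ζ x) = f ζ := by
  apply hf
  intro y hy
  rw [abs_le] at hy
  unfold suP
  rw [Function.update_of_ne (by omega), Function.update_of_ne (by omega)]

lemma van_flip (hK : 2 ≤ K)
    (hf : ∀ η ζ : ℤ → Bool, (∀ x : ℤ, |x| ≤ (K : ℤ) - 2 → η x = ζ x) → f η = f ζ)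
    (ζ : ℤ → Bool) (x : ℤ) (hx : x ≤ -(K : ℤ) + 1 ∨ (K : ℤ) - 1 ≤ x) :
    f (flipAt ζ x) = f ζ := by
  apply hf
  intro y hy
  rw [abs_le] at hy
  unfold flipAt
  rw [Function.update_of_ne (by omega)]

lemma van_swap (hK : 2 ≤ K)
    (hf : ∀ η ζ : ℤ → Bool, (∀ x : ℤ, |x| ≤ (K : ℤ) - 2 → η x = ζ x) → f η = f ζ)
    (ζ : ℤ → Bool) (x : ℤ) (hx : x ≤ -(K : ℤ) ∨ (K : ℤ) ≤ x) : f (swapAt ζ x) = f ζ := by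
  apply hf
  intro y hy
  rw [abs_le] at hy
  unfold swapAt
  rw [Function.update_of_ne (by omega), Function.update_of_ne (by omega)]

lemma coreA (hK : 2 ≤ K)
    (hf : ∀ η ζ : ℤ → Bool, (∀ x : ℤ, |x| ≤ (K : ℤ) - 2 → η x = ζ x) → f η = f ζ)
    (m : ℤ) (hm : (K : ℤ) ≤ m) (ζ : ℤ → Bool) :
    (1 / 2) * ∑ x ∈ Finset.Icc (-m) m, (f (sdP ζ x) + f (suP ζ x) - 2 * f ζ)
      = OmegaA f ζ := by
  classical
  set W : Finset ℤ := Finset.Icc (-m) m with hWdef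
  set WB : Finset ℤ := Finset.Icc (-m - 2) (m + 2) with hWBdef
  set u : ℤ → ℝ := fun x => f (sdP ζ x) - f ζ with hu
  set v : ℤ → ℝ := fun x => f (suP ζ x) - f ζ with hv
  set d : ℤ → ℝ := fun x => f (flipAt ζ x) - f ζ with hd
  set sw : ℤ → ℝ := fun x => f (swapAt ζ x) - f ζ with hsw
  set q : ℤ → ℝ := fun x => if ζ x = ζ (x + 1) then d x + d (x + 1) else 0 with hq
  set w1 : ℤ → ℝ := fun x => if ζ x = ζ (x + 1) then d x else 0 with hw1
  set w2 : ℤ → ℝ := fun x => if ζ (x - 1) = ζ x then d x else 0 with hw2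
  -- support facts
  have hu0 : ∀ x : ℤ, x ∉ W → u x = 0 := by
    intro x hx
    rw [hWdef, Finset.mem_Icc] at hx
    rw [hu]
    simp only [sub_eq_zero]
    exact van_sdP hK hf ζ x (by omega)
  have hv0 : ∀ x : ℤ, x ∉ W → v x = 0 := by
    intro x hx
    rw [hWdef, Finset.mem_Icc] at hx
    rw [hv]
    simp only [sub_eq_zero]
    exact van_suP hK hf ζ x (by omega)
  have hd0 : ∀ x : ℤ, x ∉ WB → d x = 0 := by
    intro x hx
    rw [hWBdef, Finset.mem_Icc] at hx
    rw [hd]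
    simp only [sub_eq_zero]
    exact van_flip hK hf ζ x (by omega)
  have hsw0 : ∀ x : ℤ, x ∉ WB → sw x = 0 := by
    intro x hx
    rw [hWBdef, Finset.mem_Icc] at hx
    rw [hsw]
    simp only [sub_eq_zero]
    exact van_swap hK hf ζ x (by omega)
  have hushift0 : ∀ x : ℤ, x ∉ WB → u (x + 1) = 0 := by
    intro x hx
    rw [hWBdef, Finset.mem_Icc] at hx
    rw [hu]
    simp only [sub_eq_zero]
    exact van_sdP hK hf ζ (x + 1) (by omega)
  have hq0 : ∀ x : ℤ, x ∉ WB → q x = 0 := by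
    intro x hx
    rw [hWBdef, Finset.mem_Icc] at hx
    rw [hq]
    simp only
    rw [hd]
    simp only [sub_eq_zero]
    rw [van_flip hK hf ζ x (by omega), van_flip hK hf ζ (x + 1) (by omega)]
    simp
  have hw10 : ∀ x : ℤ, x ∉ WB → w1 x = 0 := by
    intro x hx
    rw [hWBdef, Finset.mem_Icc] at hx
    rw [hw1]
    simp only
    rw [hd]
    simp only [sub_eq_zero]
    rw [van_flip hK hf ζ x (by omega)]
    simp
  have hw20 : ∀ x : ℤ, x ∉ WB → w2 x = 0 := by
    intro x hx
    rw [hWBdef, Finset.mem_Icc] at hx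
    rw [hw2]
    simp only
    rw [hd]
    simp only [sub_eq_zero]
    rw [van_flip hK hf ζ x (by omega)]
    simp
  have hw2shift0 : ∀ x : ℤ, x ∉ WB → w2 (x + 1) = 0 := by
    intro x hx
    rw [hWBdef, Finset.mem_Icc] at hx
    rw [hw2]
    simp only
    rw [hd]
    simp only [sub_eq_zero]
    rw [van_flip hK hf ζ (x + 1) (by omega)]
    simp
  -- summability
  have hSu : Summable u := summable_of_ne_finset_zero hu0
  have hSv : Summable v := summable_of_ne_finset_zero hv0
  have hSd : Summable d := summable_of_ne_finset_zero hd0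
  have hSsw : Summable sw := summable_of_ne_finset_zero hsw0
  have hSus : Summable (fun x => u (x + 1)) := summable_of_ne_finset_zero hushift0
  have hSq : Summable q := summable_of_ne_finset_zero hq0
  have hSw1 : Summable w1 := summable_of_ne_finset_zero hw10
  have hSw2 : Summable w2 := summable_of_ne_finset_zero hw20
  have hSw2s : Summable (fun x => w2 (x + 1)) := summable_of_ne_finset_zero hw2shift0
  -- step 1 : finite sum to tsums
  have step1 : ∑ x ∈ W, (f (sdP ζ x) + f (suP ζ x) - 2 * f ζ) = (∑' x, u x) + (∑' x, v x) := by
    rw [tsum_eq_sum hu0, tsum_eq_sum hv0, ← Finset.sum_add_distrib]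
    apply Finset.sum_congr rfl
    intro x _
    rw [hu, hv]
    simp only
    ring
  -- step 2 : shift u
  have step2 : (∑' x, u x) = ∑' x, u (x + 1) := by
    have := Equiv.tsum_eq (Equiv.addRight (1 : ℤ)) u
    simp only [Equiv.coe_addRight] at this
    exact this.symm
  -- step 3 : combine
  have step3 : (∑' x, u (x + 1)) + (∑' x, v x) = ∑' x, (q x + sw x) := by
    rw [← Summable.tsum_add hSus hSv]
    apply tsum_congr
    intro x
    have hk := key_swap_flip f ζ x
    rw [hu, hv, hq, hsw, hd]
    simp only
    exact hk
  -- step 4 : split q and sw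
  have hqsplit : ∀ x : ℤ, q x = w1 x + w2 (x + 1) := by
    intro x
    rw [hq, hw1, hw2]
    simp only [add_sub_cancel_right]
    by_cases hcc : ζ x = ζ (x + 1)
    · rw [if_pos hcc, if_pos hcc, if_pos hcc]
    · rw [if_neg hcc, if_neg hcc, if_neg hcc]
      ring
  have step4 : (∑' x, (q x + sw x)) = ((∑' x, w1 x) + (∑' x, w2 x)) + ∑' x, sw x := by
    rw [Summable.tsum_add hSq hSsw]
    congr 1
    calc ∑' x, q x = ∑' x, (w1 x + w2 (x + 1)) := tsum_congr hqsplit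
      _ = (∑' x, w1 x) + (∑' x, w2 (x + 1)) := Summable.tsum_add hSw1 hSw2s
      _ = (∑' x, w1 x) + (∑' x, w2 x) := by
          congr 1
          have := Equiv.tsum_eq (Equiv.addRight (1 : ℤ)) w2
          simp only [Equiv.coe_addRight] at this
          exact this
  -- step 5 : recombine into cA
  have step5 : (1 / 2 : ℝ) * ((∑' x, w1 x) + (∑' x, w2 x))
      = ∑' x, cA x ζ * (f (flipAt ζ x) - f ζ) := by
    rw [← Summable.tsum_add hSw1 hSw2, ← tsum_mul_left]
    apply tsum_congr
    intro x
    rw [hw1, hw2]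
    simp only
    unfold cA
    by_cases h1 : ζ x = ζ (x + 1) <;> by_cases h2 : ζ x = ζ (x - 1)
    · rw [if_pos h1, if_pos h2, if_pos h1, if_pos h2.symm, hd]; ring
    · rw [if_pos h1, if_neg h2, if_pos h1, if_neg (fun hh => h2 hh.symm), hd]; ring
    · rw [if_neg h1, if_pos h2, if_neg h1, if_pos h2.symm, hd]; ring
    · rw [if_neg h1, if_neg h2, if_neg h1, if_neg (fun hh => h2 hh.symm)]; ring
  -- put everything together
  rw [step1, step2, step3]
  rw [show (∑' x, (q x + sw x)) = ((∑' x, w1 x) + (∑' x, w2 x)) + ∑' x, sw x from step4]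
  rw [mul_add, step5]
  unfold OmegaA
  congr 1

lemma coreB (hK : 2 ≤ K)
    (hf : ∀ η ζ : ℤ → Bool, (∀ x : ℤ, |x| ≤ (K : ℤ) - 2 → η x = ζ x) → f η = f ζ)
    (p₀ p₁ p₂ p₃ : ℝ) (m : ℤ) (hm : (K : ℤ) ≤ m) (ζ : ℤ → Bool) :
    ∑ x ∈ Finset.Icc (-m) m, cB p₀ p₁ p₂ p₃ x ζ * (f (flipAt ζ x) - f ζ)
      = OmegaB p₀ p₁ p₂ p₃ f ζ := by
  unfold OmegaB
  refine (tsum_eq_sum ?_).symm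
  intro x hx
  rw [Finset.mem_Icc] at hx
  rw [van_flip hK hf ζ x (by omega)]
  simp

end AuxPPGL6
section AuxPPGL7

lemma PB_lin2 (p₀ p₁ p₂ p₃ : ℝ) (N : ℕ) (a : ℝ) (u v : (ℤ → Bool) → ℝ) (η : ℤ → Bool) :
    PBop p₀ p₁ p₂ p₃ N (fun ζ => u ζ + a * v ζ) η
      = PBop p₀ p₁ p₂ p₃ N u η + a * PBop p₀ p₁ p₂ p₃ N v η := by
  unfold PBop
  rw [show ∀ S : Finset ℤ, ∑ y ∈ S,
      ((1 - cBN p₀ p₁ p₂ p₃ N y η) * (u η + a * v η) +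
        cBN p₀ p₁ p₂ p₃ N y η * (u (flipAt η y) + a * v (flipAt η y)))
    = ∑ y ∈ S, ((1 - cBN p₀ p₁ p₂ p₃ N y η) * u η + cBN p₀ p₁ p₂ p₃ N y η * u (flipAt η y))
      + a * ∑ y ∈ S, ((1 - cBN p₀ p₁ p₂ p₃ N y η) * v η
          + cBN p₀ p₁ p₂ p₃ N y η * v (flipAt η y)) from fun S => by
      rw [Finset.mul_sum, ← Finset.sum_add_distrib]
      exact Finset.sum_congr rfl fun y _ => by ring]
  ring

lemma loc_psiN (N K : ℕ) (hK : 2 ≤ K) (f : (ℤ → Bool) → ℝ)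
    (hf : ∀ η ζ : ℤ → Bool, (∀ x : ℤ, |x| ≤ (K : ℤ) - 2 → η x = ζ x) → f η = f ζ) :
    Loc (K : ℤ) (psiN N f) := by
  intro η ζ hag
  apply hf
  intro x hx
  unfold extendCfg
  by_cases hmem : lN N ≤ x ∧ x ≤ rN N
  · rw [if_pos hmem, if_pos hmem]
    apply hag
    rw [abs_le] at hx ⊢
    omega
  · rw [if_neg hmem, if_neg hmem]

lemma GA'_psi (N K : ℕ) (hK : 2 ≤ K) (f : (ℤ → Bool) → ℝ)
    (hf : ∀ η ζ : ℤ → Bool, (∀ x : ℤ, |x| ≤ (K : ℤ) - 2 → η x = ζ x) → f η = f ζ)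
    (hrN : (K : ℤ) + 6 ≤ rN N) (hlN : lN N ≤ -((K : ℤ) + 6)) (η : ℤ → Bool) :
    GA' ((K : ℤ) + 3) (psiN N f) η = OmegaA f (extendCfg N η) := by
  rw [← coreA hK hf ((K : ℤ) + 3) (by omega) (extendCfg N η)]
  unfold GA'
  congr 1
  apply Finset.sum_congr rfl
  intro x hx
  rw [Finset.mem_Icc] at hx
  have h1 : psiN N f (sdP η x) = f (sdP (extendCfg N η) x) := by
    unfold psiN sdP
    rw [extendCfg_update N _ x false (by omega) (by omega),
      extendCfg_update N η (x - 1) true (by omega) (by omega)]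
  have h2 : psiN N f (suP η x) = f (suP (extendCfg N η) x) := by
    unfold psiN suP
    rw [extendCfg_update N _ x false (by omega) (by omega),
      extendCfg_update N η (x + 1) true (by omega) (by omega)]
  rw [h1, h2]
  rfl

lemma GB'_psi (p₀ p₁ p₂ p₃ : ℝ) (N K : ℕ) (hK : 2 ≤ K) (f : (ℤ → Bool) → ℝ)
    (hf : ∀ η ζ : ℤ → Bool, (∀ x : ℤ, |x| ≤ (K : ℤ) - 2 → η x = ζ x) → f η = f ζ)
    (hrN : (K : ℤ) + 6 ≤ rN N) (hlN : lN N ≤ -((K : ℤ) + 6)) (η : ℤ → Bool) :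
    GB' p₀ p₁ p₂ p₃ ((K : ℤ) + 3) (psiN N f) η
      = OmegaB p₀ p₁ p₂ p₃ f (extendCfg N η) := by
  rw [← coreB hK hf p₀ p₁ p₂ p₃ ((K : ℤ) + 3) (by omega) (extendCfg N η)]
  unfold GB'
  apply Finset.sum_congr rfl
  intro x hx
  rw [Finset.mem_Icc] at hx
  have hcb : cB p₀ p₁ p₂ p₃ x η = cB p₀ p₁ p₂ p₃ x (extendCfg N η) := by
    unfold cB pSel
    rw [extendCfg_apply_of_mem N η (x - 1) (by omega) (by omega),
      extendCfg_apply_of_mem N η (x + 1) (by omega) (by omega),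
      extendCfg_apply_of_mem N η x (by omega) (by omega)]
  have hfl : psiN N f (flipAt η x) = f (flipAt (extendCfg N η) x) := by
    unfold psiN flipAt
    rw [extendCfg_update N η x (!η x) (by omega) (by omega),
      extendCfg_apply_of_mem N η x (by omega) (by omega)]
  rw [hcb, hfl]
  rfl

end AuxPPGL7
set_option maxHeartbeats 3200000 in
/-- Fix `r, s ≥ 1`, `p₀,p₁,p₂,p₃ ∈ [0,1]`, `K ≥ 2`, and `f` depending on `η` only through
the coordinates `η(x)` with `|x| ≤ K-2`.  Then there are `C > 0` and `N₀` such that for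
all `N ≥ N₀` and all `η ∈ Σ_N`,
`|(Ω^N_{[r,s]'} ψ_N f)(η) - ψ_N((r/(r+s))Ω_{A'}f + (s/(r+s))Ω_B f)(η)| ≤ C/N`, where
`(Ω^N_{[r,s]'} g)(η) = (N/(r+s)) ∑_ξ (P_{A'}^r P_B^s)(η,ξ)[g(ξ) - g(η)]`, i.e. the
matrix product `P_{A'}^r P_B^s` acts on `g` by applying `P_B` `s` times and then
`P_{A'}` `r` times. -/
theorem periodic_pattern_generator_limit (r s : ℕ) (hr : 1 ≤ r) (hs : 1 ≤ s)
    (p₀ p₁ p₂ p₃ : ℝ)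
    (h₀ : p₀ ∈ Set.Icc (0 : ℝ) 1) (h₁ : p₁ ∈ Set.Icc (0 : ℝ) 1)
    (h₂ : p₂ ∈ Set.Icc (0 : ℝ) 1) (h₃ : p₃ ∈ Set.Icc (0 : ℝ) 1)
    (K : ℕ) (hK : 2 ≤ K) (f : (ℤ → Bool) → ℝ)
    (hf : ∀ η ζ : ℤ → Bool, (∀ x : ℤ, |x| ≤ (K : ℤ) - 2 → η x = ζ x) → f η = f ζ) :
    ∃ C : ℝ, 0 < C ∧ ∃ N₀ : ℕ, ∀ N : ℕ, N₀ ≤ N → ∀ η : ℤ → Bool,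
      |((N : ℝ) / ((r : ℝ) + (s : ℝ))) *
          ((PAop N)^[r] ((PBop p₀ p₁ p₂ p₃ N)^[s] (psiN N f)) η - psiN N f η) -
        psiN N (fun ζ => ((r : ℝ) / ((r : ℝ) + (s : ℝ))) * OmegaA f ζ +
          ((s : ℝ) / ((r : ℝ) + (s : ℝ))) * OmegaB p₀ p₁ p₂ p₃ f ζ) η| ≤ C / (N : ℝ) := by
  classical
  obtain ⟨M, hM0, hMb⟩ := exists_bound ((K : ℤ) - 2) f hf
  set M1 : ℝ := (2 * ((K : ℝ) + 3) + 1) * (2 * M) with hM1def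
  set M2 : ℝ := (2 * ((K : ℝ) + 5) + 1) * (2 * M1) with hM2def
  have hM10 : 0 ≤ M1 := mul_nonneg (by positivity) (by linarith)
  have hM20 : 0 ≤ M2 := mul_nonneg (by positivity) (by linarith)
  set Ctot : ℝ := (s : ℝ) * ((s : ℝ) * M2) + (r : ℝ) * (((r : ℝ) + (s : ℝ)) * M2) with hCtotdef
  have hCtot0 : 0 ≤ Ctot := by
    apply add_nonneg
    · exact mul_nonneg (by positivity) (mul_nonneg (by positivity) hM20)
    · exact mul_nonneg (by positivity) (mul_nonneg (by positivity) hM20)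
  refine ⟨Ctot + 1, by linarith, 14 * (K + 5), ?_⟩
  intro N hN η
  have hNz : 14 * (K : ℤ) + 70 ≤ (N : ℤ) := by exact_mod_cast (by omega : 14 * K + 70 ≤ N)
  have hN1 : 1 ≤ N := by omega
  have hNR : (0 : ℝ) < (N : ℝ) := by exact_mod_cast hN1
  have hrN : (K : ℤ) + 6 ≤ rN N := by unfold rN; omega
  have hlN : lN N ≤ -((K : ℤ) + 6) := by unfold lN; omega
  set g : (ℤ → Bool) → ℝ := psiN N f with hgdef
  have locg : Loc (K : ℤ) g := loc_psiN N K hK f hf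
  set A1 : (ℤ → Bool) → ℝ := GA' ((K : ℤ) + 3) g with hA1def
  set B1 : (ℤ → Bool) → ℝ := GB' p₀ p₁ p₂ p₃ ((K : ℤ) + 3) g with hB1def
  have locA1 : Loc ((K : ℤ) + 4) A1 := (GA'_loc (K : ℤ) ((K : ℤ) + 3) g locg).mono (by omega)
  have locB1 : Loc ((K : ℤ) + 4) B1 :=
    GB'_loc p₀ p₁ p₂ p₃ (K : ℤ) ((K : ℤ) + 3) ((K : ℤ) + 4) g (by omega) (by omega)
      (by omega) locg
  have hgb : ∀ ξ, |g ξ| ≤ M := fun ξ => hMb _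
  have hcast3 : (((K : ℤ) + 3 : ℤ) : ℝ) = (K : ℝ) + 3 := by push_cast; ring
  have hcast5 : (((K : ℤ) + 5 : ℤ) : ℝ) = (K : ℝ) + 5 := by push_cast; ring
  have hA1b : ∀ ξ, |A1 ξ| ≤ M1 := by
    intro ξ
    have h := GA'_bound ((K : ℤ) + 3) (by omega) M g hgb ξ
    rw [hcast3] at h
    exact h
  have hB1b : ∀ ξ, |B1 ξ| ≤ M1 := by
    intro ξ
    have h := GB'_bound h₀ h₁ h₂ h₃ ((K : ℤ) + 3) (by omega) M g hgb ξ
    rw [hcast3] at h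
    exact h
  have hXA : ∀ ξ, |GA' ((K : ℤ) + 5) A1 ξ| ≤ M2 := by
    intro ξ
    have h := GA'_bound ((K : ℤ) + 5) (by omega) M1 A1 hA1b ξ
    rw [hcast5] at h
    exact h
  have hXB : ∀ ξ, |GA' ((K : ℤ) + 5) B1 ξ| ≤ M2 := by
    intro ξ
    have h := GA'_bound ((K : ℤ) + 5) (by omega) M1 B1 hB1b ξ
    rw [hcast5] at h
    exact h
  have hYB : ∀ ξ, |GB' p₀ p₁ p₂ p₃ ((K : ℤ) + 5) B1 ξ| ≤ M2 := by
    intro ξ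
    have h := GB'_bound h₀ h₁ h₂ h₃ ((K : ℤ) + 5) (by omega) M1 B1 hB1b ξ
    rw [hcast5] at h
    exact h
  -- expansions
  have expAg : ∀ ξ, PAop N g ξ = g ξ + (1 / (N : ℝ)) * A1 ξ := by
    intro ξ
    have h := PA_expand N ((K : ℤ) + 2) (by omega) g (locg.mono (by omega))
      (by omega) (by omega) ξ
    rw [show (K : ℤ) + 2 + 1 = (K : ℤ) + 3 from by ring] at h
    exact h
  have expBg : ∀ ξ, PBop p₀ p₁ p₂ p₃ N g ξ = g ξ + (1 / (N : ℝ)) * B1 ξ := by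
    intro ξ
    have h := PB_expand (p₀ := p₀) (p₁ := p₁) (p₂ := p₂) (p₃ := p₃) N ((K : ℤ) + 2)
      (by omega) g (locg.mono (by omega)) (by omega) (by omega) ξ
    rw [show (K : ℤ) + 2 + 1 = (K : ℤ) + 3 from by ring] at h
    exact h
  have expAA1 : ∀ ξ, PAop N A1 ξ = A1 ξ + (1 / (N : ℝ)) * GA' ((K : ℤ) + 5) A1 ξ := by
    intro ξ
    have h := PA_expand N ((K : ℤ) + 4) (by omega) A1 locA1 (by omega) (by omega) ξ
    rw [show (K : ℤ) + 4 + 1 = (K : ℤ) + 5 from by ring] at h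
    exact h
  have expAB1 : ∀ ξ, PAop N B1 ξ = B1 ξ + (1 / (N : ℝ)) * GA' ((K : ℤ) + 5) B1 ξ := by
    intro ξ
    have h := PA_expand N ((K : ℤ) + 4) (by omega) B1 locB1 (by omega) (by omega) ξ
    rw [show (K : ℤ) + 4 + 1 = (K : ℤ) + 5 from by ring] at h
    exact h
  have expBB1 : ∀ ξ, PBop p₀ p₁ p₂ p₃ N B1 ξ
      = B1 ξ + (1 / (N : ℝ)) * GB' p₀ p₁ p₂ p₃ ((K : ℤ) + 5) B1 ξ := by
    intro ξ
    have h := PB_expand (p₀ := p₀) (p₁ := p₁) (p₂ := p₂) (p₃ := p₃) N ((K : ℤ) + 4)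
      (by omega) B1 locB1 (by omega) (by omega) ξ
    rw [show (K : ℤ) + 4 + 1 = (K : ℤ) + 5 from by ring] at h
    exact h
  -- first induction: powers of PB
  have ind1 : ∀ k : ℕ, k ≤ s → ∀ ξ,
      |(PBop p₀ p₁ p₂ p₃ N)^[k] g ξ - (g ξ + (k : ℝ) / (N : ℝ) * B1 ξ)|
        ≤ (k : ℝ) * ((s : ℝ) * M2) / (N : ℝ) ^ 2 := by
    intro k
    induction k with
    | zero => intro _ ξ; simp
    | succ k ih =>
      intro hk ξ
      have hk' : k ≤ s := by omega
      have hkr : (k : ℝ) ≤ (s : ℝ) := by exact_mod_cast hk'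
      rw [Function.iterate_succ_apply']
      have hcontr : |PBop p₀ p₁ p₂ p₃ N ((PBop p₀ p₁ p₂ p₃ N)^[k] g) ξ
          - PBop p₀ p₁ p₂ p₃ N (fun ζ => g ζ + (k : ℝ) / (N : ℝ) * B1 ζ) ξ|
          ≤ (k : ℝ) * ((s : ℝ) * M2) / (N : ℝ) ^ 2 :=
        PB_contr h₀ h₁ h₂ h₃ N hN1 _ _ _ (fun ζ => ih hk' ζ) ξ
      have hψ : PBop p₀ p₁ p₂ p₃ N (fun ζ => g ζ + (k : ℝ) / (N : ℝ) * B1 ζ) ξ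
          = g ξ + ((k : ℝ) + 1) / (N : ℝ) * B1 ξ
            + (k : ℝ) / (N : ℝ) ^ 2 * GB' p₀ p₁ p₂ p₃ ((K : ℤ) + 5) B1 ξ := by
        rw [PB_lin2 p₀ p₁ p₂ p₃ N ((k : ℝ) / (N : ℝ)) g B1 ξ, expBg ξ, expBB1 ξ]
        field_simp
        ring
      calc |PBop p₀ p₁ p₂ p₃ N ((PBop p₀ p₁ p₂ p₃ N)^[k] g) ξ
            - (g ξ + ((k + 1 : ℕ) : ℝ) / (N : ℝ) * B1 ξ)|
          ≤ |PBop p₀ p₁ p₂ p₃ N ((PBop p₀ p₁ p₂ p₃ N)^[k] g) ξ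
              - PBop p₀ p₁ p₂ p₃ N (fun ζ => g ζ + (k : ℝ) / (N : ℝ) * B1 ζ) ξ|
            + |PBop p₀ p₁ p₂ p₃ N (fun ζ => g ζ + (k : ℝ) / (N : ℝ) * B1 ζ) ξ
              - (g ξ + ((k + 1 : ℕ) : ℝ) / (N : ℝ) * B1 ξ)| := abs_sub_le _ _ _
        _ ≤ (k : ℝ) * ((s : ℝ) * M2) / (N : ℝ) ^ 2 + (k : ℝ) / (N : ℝ) ^ 2 * M2 := by
            apply add_le_add hcontr
            have heq : PBop p₀ p₁ p₂ p₃ N (fun ζ => g ζ + (k : ℝ) / (N : ℝ) * B1 ζ) ξ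
                - (g ξ + ((k + 1 : ℕ) : ℝ) / (N : ℝ) * B1 ξ)
                = (k : ℝ) / (N : ℝ) ^ 2 * GB' p₀ p₁ p₂ p₃ ((K : ℤ) + 5) B1 ξ := by
              rw [hψ]
              push_cast
              ring
            rw [heq, abs_mul, abs_of_nonneg (by positivity)]
            exact mul_le_mul_of_nonneg_left (hYB ξ) (by positivity)
        _ ≤ ((k + 1 : ℕ) : ℝ) * ((s : ℝ) * M2) / (N : ℝ) ^ 2 := by
            push_cast
            rw [show (k : ℝ) * ((s : ℝ) * M2) / (N : ℝ) ^ 2 + (k : ℝ) / (N : ℝ) ^ 2 * M2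
              = ((k : ℝ) * ((s : ℝ) * M2) + (k : ℝ) * M2) / (N : ℝ) ^ 2 from by ring]
            gcongr
            nlinarith [mul_nonneg (sub_nonneg.mpr hkr) hM20]
  -- second induction: powers of PA
  have ind2 : ∀ j : ℕ, j ≤ r → ∀ ξ,
      |(PAop N)^[j] ((PBop p₀ p₁ p₂ p₃ N)^[s] g) ξ
        - (g ξ + (j : ℝ) / (N : ℝ) * A1 ξ + (s : ℝ) / (N : ℝ) * B1 ξ)|
        ≤ ((s : ℝ) * ((s : ℝ) * M2) + (j : ℝ) * (((r : ℝ) + (s : ℝ)) * M2)) / (N : ℝ) ^ 2 := by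
    intro j
    induction j with
    | zero =>
      intro _ ξ
      simpa using ind1 s le_rfl ξ
    | succ j ih =>
      intro hj ξ
      have hj' : j ≤ r := by omega
      have hjr : (j : ℝ) ≤ (r : ℝ) := by exact_mod_cast hj'
      have hsr : (0 : ℝ) ≤ (s : ℝ) := by positivity
      rw [Function.iterate_succ_apply']
      have hcontr : |PAop N ((PAop N)^[j] ((PBop p₀ p₁ p₂ p₃ N)^[s] g)) ξ
          - PAop N (fun ζ => g ζ + (j : ℝ) / (N : ℝ) * A1 ζ + (s : ℝ) / (N : ℝ) * B1 ζ) ξ|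
          ≤ ((s : ℝ) * ((s : ℝ) * M2) + (j : ℝ) * (((r : ℝ) + (s : ℝ)) * M2)) / (N : ℝ) ^ 2 :=
        PA_contr N hN1 _ _ _ (fun ζ => ih hj' ζ) ξ
      have hψ : PAop N (fun ζ => g ζ + (j : ℝ) / (N : ℝ) * A1 ζ + (s : ℝ) / (N : ℝ) * B1 ζ) ξ
          = g ξ + ((j : ℝ) + 1) / (N : ℝ) * A1 ξ + (s : ℝ) / (N : ℝ) * B1 ξ
            + 1 / (N : ℝ) ^ 2 * ((j : ℝ) * GA' ((K : ℤ) + 5) A1 ξ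
              + (s : ℝ) * GA' ((K : ℤ) + 5) B1 ξ) := by
        rw [PA_lin N ((j : ℝ) / (N : ℝ)) ((s : ℝ) / (N : ℝ)) g A1 B1 ξ, expAg ξ, expAA1 ξ,
          expAB1 ξ]
        field_simp
        ring
      calc |PAop N ((PAop N)^[j] ((PBop p₀ p₁ p₂ p₃ N)^[s] g)) ξ
            - (g ξ + ((j + 1 : ℕ) : ℝ) / (N : ℝ) * A1 ξ + (s : ℝ) / (N : ℝ) * B1 ξ)|
          ≤ |PAop N ((PAop N)^[j] ((PBop p₀ p₁ p₂ p₃ N)^[s] g)) ξ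
              - PAop N (fun ζ => g ζ + (j : ℝ) / (N : ℝ) * A1 ζ + (s : ℝ) / (N : ℝ) * B1 ζ) ξ|
            + |PAop N (fun ζ => g ζ + (j : ℝ) / (N : ℝ) * A1 ζ + (s : ℝ) / (N : ℝ) * B1 ζ) ξ
              - (g ξ + ((j + 1 : ℕ) : ℝ) / (N : ℝ) * A1 ξ + (s : ℝ) / (N : ℝ) * B1 ξ)| :=
            abs_sub_le _ _ _
        _ ≤ ((s : ℝ) * ((s : ℝ) * M2) + (j : ℝ) * (((r : ℝ) + (s : ℝ)) * M2)) / (N : ℝ) ^ 2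
            + 1 / (N : ℝ) ^ 2 * (((r : ℝ) + (s : ℝ)) * M2) := by
            apply add_le_add hcontr
            have heq : PAop N (fun ζ => g ζ + (j : ℝ) / (N : ℝ) * A1 ζ
                  + (s : ℝ) / (N : ℝ) * B1 ζ) ξ
                - (g ξ + ((j + 1 : ℕ) : ℝ) / (N : ℝ) * A1 ξ + (s : ℝ) / (N : ℝ) * B1 ξ)
                = 1 / (N : ℝ) ^ 2 * ((j : ℝ) * GA' ((K : ℤ) + 5) A1 ξ
                  + (s : ℝ) * GA' ((K : ℤ) + 5) B1 ξ) := by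
              rw [hψ]
              push_cast
              ring
            rw [heq, abs_mul, abs_of_nonneg (by positivity : (0:ℝ) ≤ 1 / (N : ℝ) ^ 2)]
            apply mul_le_mul_of_nonneg_left _ (by positivity)
            calc |(j : ℝ) * GA' ((K : ℤ) + 5) A1 ξ + (s : ℝ) * GA' ((K : ℤ) + 5) B1 ξ|
                ≤ (j : ℝ) * |GA' ((K : ℤ) + 5) A1 ξ| + (s : ℝ) * |GA' ((K : ℤ) + 5) B1 ξ| := by
                  calc |(j : ℝ) * GA' ((K : ℤ) + 5) A1 ξ + (s : ℝ) * GA' ((K : ℤ) + 5) B1 ξ|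
                      ≤ |(j : ℝ) * GA' ((K : ℤ) + 5) A1 ξ|
                        + |(s : ℝ) * GA' ((K : ℤ) + 5) B1 ξ| := abs_add_le _ _
                    _ = (j : ℝ) * |GA' ((K : ℤ) + 5) A1 ξ|
                        + (s : ℝ) * |GA' ((K : ℤ) + 5) B1 ξ| := by
                        rw [abs_mul, abs_mul, abs_of_nonneg (by positivity : (0:ℝ) ≤ (j : ℝ)),
                          abs_of_nonneg hsr]
              _ ≤ (j : ℝ) * M2 + (s : ℝ) * M2 := by
                  apply add_le_add
                  · exact mul_le_mul_of_nonneg_left (hXA ξ) (by positivity)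
                  · exact mul_le_mul_of_nonneg_left (hXB ξ) hsr
              _ ≤ ((r : ℝ) + (s : ℝ)) * M2 := by
                  have h5 : (j : ℝ) * M2 ≤ (r : ℝ) * M2 :=
                    mul_le_mul_of_nonneg_right hjr hM20
                  linarith
        _ = ((s : ℝ) * ((s : ℝ) * M2)
            + ((j + 1 : ℕ) : ℝ) * (((r : ℝ) + (s : ℝ)) * M2)) / (N : ℝ) ^ 2 := by
            push_cast
            field_simp
            ring
  -- conclusion
  have hfin := ind2 r le_rfl η
  have hrs1 : (1 : ℝ) ≤ (r : ℝ) + (s : ℝ) := by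
    have h1 : (1 : ℝ) ≤ (r : ℝ) := by exact_mod_cast hr
    have h2 : (0 : ℝ) ≤ (s : ℝ) := by positivity
    linarith
  have hrs0 : (0 : ℝ) < (r : ℝ) + (s : ℝ) := by linarith
  have hA1eq : A1 η = OmegaA f (extendCfg N η) := GA'_psi N K hK f hf hrN hlN η
  have hB1eq : B1 η = OmegaB p₀ p₁ p₂ p₃ f (extendCfg N η) :=
    GB'_psi p₀ p₁ p₂ p₃ N K hK f hf hrN hlN η
  have htarg : psiN N (fun ζ => ((r : ℝ) / ((r : ℝ) + (s : ℝ))) * OmegaA f ζ +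
        ((s : ℝ) / ((r : ℝ) + (s : ℝ))) * OmegaB p₀ p₁ p₂ p₃ f ζ) η
      = ((r : ℝ) / ((r : ℝ) + (s : ℝ))) * A1 η + ((s : ℝ) / ((r : ℝ) + (s : ℝ))) * B1 η := by
    unfold psiN
    rw [hA1eq, hB1eq]
  rw [htarg]
  have hkey : ((N : ℝ) / ((r : ℝ) + (s : ℝ))) *
        ((PAop N)^[r] ((PBop p₀ p₁ p₂ p₃ N)^[s] g) η - g η)
      - (((r : ℝ) / ((r : ℝ) + (s : ℝ))) * A1 η + ((s : ℝ) / ((r : ℝ) + (s : ℝ))) * B1 η)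
      = ((N : ℝ) / ((r : ℝ) + (s : ℝ))) * ((PAop N)^[r] ((PBop p₀ p₁ p₂ p₃ N)^[s] g) η
          - (g η + (r : ℝ) / (N : ℝ) * A1 η + (s : ℝ) / (N : ℝ) * B1 η)) := by
    field_simp
    ring
  rw [hkey, abs_mul, abs_of_pos (by positivity : (0 : ℝ) < (N : ℝ) / ((r : ℝ) + (s : ℝ)))]
  calc ((N : ℝ) / ((r : ℝ) + (s : ℝ))) * |(PAop N)^[r] ((PBop p₀ p₁ p₂ p₃ N)^[s] g) η
        - (g η + (r : ℝ) / (N : ℝ) * A1 η + (s : ℝ) / (N : ℝ) * B1 η)|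
      ≤ ((N : ℝ) / ((r : ℝ) + (s : ℝ)))
        * (((s : ℝ) * ((s : ℝ) * M2) + (r : ℝ) * (((r : ℝ) + (s : ℝ)) * M2)) / (N : ℝ) ^ 2) :=
        mul_le_mul_of_nonneg_left hfin (by positivity)
    _ = Ctot / (((r : ℝ) + (s : ℝ)) * (N : ℝ)) := by
        rw [hCtotdef]
        field_simp
    _ ≤ (Ctot + 1) / (N : ℝ) := by
        rw [div_le_div_iff₀ (by positivity) hNR]
        nlinarith [mul_nonneg hCtot0 hNR.le, mul_pos hrs0 hNR]
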